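/- arXiv:2110.10020 — 3 statements merged into one kernel-verified Lean document; each statement's English description precedes it below -/
import Mathlib

section
/- For every real number c, the set {k ∈ ℤ : λ_k = c} contains at most 5 elements (i.e., each eigenvalue iλ_k of the operator ∂_x(-βD^{2m} - αH^{2r} - 2μ) has multiplicity at most 5). -/
/-!
`λ` is the restriction to `ℤ` of the `C¹` function
`F x = -β x |x|^(2m) + α x |x|^(2r) - 2μ x`, whose derivative is `g |x| - 2μ` with
`g t = α (2r+1) t^(2r) - β (2m+1) t^(2m)`. For `t > 0`, `g' t = 0` forces `t^(2m-2r)` to equal a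
fixed constant, so `g'` has at most one zero on `(0, ∞)`. By Rolle, `g` takes each value at most
twice on `[0, ∞)`, hence `F'` has at most four zeros, and by Rolle again `F` takes each value at
most five times.
-/

open Set

theorem hasDerivAt_mul_abs_rpow {p : ℝ} (hp : 0 ≤ p) (x : ℝ) :
    HasDerivAt (fun y : ℝ => y * |y| ^ p) ((p + 1) * |x| ^ p) x := by
  rcases eq_or_ne x 0 with rfl | hx
  · -- the difference quotient at `0` is `|t| ^ p`
    have hcont : ContinuousAt (fun y : ℝ => |y| ^ p) 0 :=
      ((Real.continuous_rpow_const hp).comp continuous_abs).continuousAt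
    have hp0 : p * |(0 : ℝ)| ^ p = 0 := by
      rcases hp.eq_or_lt with rfl | hp <;> simp [Real.zero_rpow, *, ne_of_gt]
    rw [hasDerivAt_iff_tendsto_slope_zero, add_mul, hp0, zero_add, one_mul]
    refine (hcont.tendsto.mono_left nhdsWithin_le_nhds).congr' ?_
    filter_upwards [self_mem_nhdsWithin] with t ht
    simp [inv_mul_cancel_left₀ (show t ≠ 0 from ht)]
  · have hx' : |x| ≠ 0 := abs_ne_zero.2 hx
    refine ((hasDerivAt_id x).mul
      ((hasDerivAt_abs hx).rpow_const (p := p) (Or.inl hx'))).congr_deriv ?_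
    rw [Real.rpow_sub_one hx', id,
      show x * (SignType.sign x * p * (|x| ^ p / |x|)) = x * SignType.sign x * (p * |x| ^ p) / |x|
        by ring, self_mul_sign, mul_div_cancel_left₀ _ hx']
    ring

theorem Set.encard_le_of_forall_finset_card_le {α : Type*} {S : Set α} {n : ℕ}
    (h : ∀ s : Finset α, ↑s ⊆ S → s.card ≤ n) : S.encard ≤ n := by
  by_contra! hlt
  obtain ⟨t, hts, ht⟩ := exists_subset_encard_eq (Order.add_one_le_of_lt hlt)
  have htf : t.Finite := finite_of_encard_eq_coe (k := n + 1) (by simpa using ht)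
  have hcard := h htf.toFinset (by simpa using hts)
  rw [htf.encard_eq_coe_toFinset_card] at ht
  norm_cast at ht
  omega

theorem encard_fiber_le_encard_zeros_deriv_add_one {f : ℝ → ℝ} {D Z : Set ℝ}
    [D.OrdConnected] (hf : ContinuousOn f D) (hZ : ∀ x ∈ interior D, deriv f x = 0 → x ∈ Z)
    (c : ℝ) :
    {x ∈ D | f x = c}.encard ≤ Z.encard + 1 := by
  rcases Z.finite_or_infinite with hZfin | hZinf
  · rw [hZfin.encard_eq_coe_toFinset_card]
    refine mod_cast Set.encard_le_of_forall_finset_card_le fun s hs ↦ ?_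
    refine Finset.card_le_of_interleaved fun x hx y hy hxy _ ↦ ?_
    obtain ⟨hxD, hfx⟩ := hs hx
    obtain ⟨hyD, hfy⟩ := hs hy
    obtain ⟨z, hz, hdz⟩ :=
      exists_deriv_eq_zero hxy (hf.mono (Set.Icc_subset D hxD hyD)) (hfx.trans hfy.symm)
    have hzD : z ∈ interior D :=
      interior_maximal (Ioo_subset_Icc_self.trans (Set.Icc_subset D hxD hyD)) isOpen_Ioo hz
    exact ⟨z, hZfin.mem_toFinset.2 (hZ z hzD hdz), hz⟩
  · simp [hZinf.encard_eq]

theorem encard_abs_preimage_le {G : Type*} [AddGroup G] [LinearOrder G] (L : Set G) :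
    (abs ⁻¹' L).encard ≤ 2 * L.encard :=
  calc (abs ⁻¹' L).encard ≤ (L ∪ -L).encard := by
        refine encard_le_encard fun x (hx : |x| ∈ L) ↦ ?_
        rcases abs_choice x with h | h
        · exact Or.inl (h ▸ hx)
        · exact Or.inr (show -x ∈ L from h ▸ hx)
    _ ≤ L.encard + (-L).encard := encard_union_le _ _
    _ = 2 * L.encard := by rw [encard_neg, two_mul]

theorem subsingleton_deriv_rpow_sub_rpow_eq_zero {A B a b : ℝ} (hB : B ≠ 0) (hb : b ≠ 0)
    (hab : a ≠ b) :
    {t ∈ Ioi (0 : ℝ) | deriv (fun t ↦ A * t ^ a - B * t ^ b) t = 0}.Subsingleton := by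
  have hpow : ∀ t ∈ Ioi (0 : ℝ), deriv (fun t ↦ A * t ^ a - B * t ^ b) t = 0 →
      t ^ (b - a) = A * a / (B * b) := by
    intro t (ht : 0 < t) hdt
    have hderiv : deriv (fun t ↦ A * t ^ a - B * t ^ b) t = _ :=
      (((Real.hasDerivAt_rpow_const (p := a) (Or.inl ht.ne')).const_mul A).sub
        ((Real.hasDerivAt_rpow_const (p := b) (Or.inl ht.ne')).const_mul B)).deriv
    have hsplit : t ^ (b - 1) = t ^ (b - a) * t ^ (a - 1) := by
      rw [← Real.rpow_add ht]; ring_nf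
    rw [hdt, hsplit] at hderiv
    rw [eq_div_iff (mul_ne_zero hB hb)]
    exact mul_right_cancel₀ (Real.rpow_pos_of_pos ht (a - 1)).ne' (by linear_combination hderiv)
  rintro s ⟨hs, hds⟩ t ⟨ht, hdt⟩
  exact Real.rpow_left_injOn (sub_ne_zero.2 hab.symm) (mem_Ioi.1 hs).le (mem_Ioi.1 ht).le
    ((hpow s hs hds).trans (hpow t ht hdt).symm)

theorem encard_fiber_rpow_sub_rpow_le_two {A B a b : ℝ} (ha : 0 ≤ a) (hb : 0 < b) (hB : B ≠ 0)
    (hab : a ≠ b) (d : ℝ) :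
    {t ∈ Ici (0 : ℝ) | A * t ^ a - B * t ^ b = d}.encard ≤ 2 := by
  have hcont : ContinuousOn (fun t : ℝ ↦ A * t ^ a - B * t ^ b) (Ici 0) :=
    ((continuous_const.mul (Real.continuous_rpow_const ha)).sub
      (continuous_const.mul (Real.continuous_rpow_const hb.le))).continuousOn
  calc _ ≤ {t ∈ Ioi (0 : ℝ) | deriv (fun t ↦ A * t ^ a - B * t ^ b) t = 0}.encard + 1 :=
        encard_fiber_le_encard_zeros_deriv_add_one hcont
          (fun t ht hdt ↦ mem_sep (by rwa [interior_Ici] at ht) hdt) d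
    _ ≤ 1 + 1 := by
        gcongr
        exact encard_le_one_iff_subsingleton.2
          (subsingleton_deriv_rpow_sub_rpow_eq_zero hB hb.ne' hab)
    _ = 2 := one_add_one_eq_two

theorem encard_fiber_mul_abs_rpow_sub_le_five {A B C a b : ℝ} (ha : 0 ≤ a) (hb : 0 < b)
    (hB : B ≠ 0) (hab : a ≠ b) (c : ℝ) :
    {x : ℝ | -B * x * |x| ^ b + A * x * |x| ^ a - C * x = c}.encard ≤ 5 := by
  set F := fun x : ℝ ↦ -B * x * |x| ^ b + A * x * |x| ^ a - C * x
  have hF_eq : F = fun y ↦ -B * (y * |y| ^ b) + A * (y * |y| ^ a) - C * id y := by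
    ext y; simp only [F, id]; ring
  have hF (x : ℝ) : HasDerivAt F (A * (a + 1) * |x| ^ a - B * (b + 1) * |x| ^ b - C) x := by
    rw [hF_eq]
    exact ((((hasDerivAt_mul_abs_rpow hb.le x).const_mul (-B)).add
      ((hasDerivAt_mul_abs_rpow ha x).const_mul A)).sub ((hasDerivAt_id x).const_mul C)).congr_deriv
      (by ring)
  have hzeros : ∀ x, deriv F x = 0 →
      x ∈ abs ⁻¹' {t ∈ Ici 0 | A * (a + 1) * t ^ a - B * (b + 1) * t ^ b = C} := fun x hx ↦
    ⟨abs_nonneg x, by rw [(hF x).deriv] at hx; linarith⟩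
  calc {x | F x = c}.encard = {x ∈ univ | F x = c}.encard := by simp
    _ ≤ (abs ⁻¹' {t ∈ Ici 0 | A * (a + 1) * t ^ a - B * (b + 1) * t ^ b = C}).encard + 1 :=
        encard_fiber_le_encard_zeros_deriv_add_one
          (continuous_iff_continuousAt.2 fun x ↦ (hF x).continuousAt).continuousOn
          (fun x _ ↦ hzeros x) c
    _ ≤ 2 * 2 + 1 := by
        gcongr
        refine (encard_abs_preimage_le _).trans ?_
        gcongr
        exact encard_fiber_rpow_sub_rpow_le_two ha hb (mul_ne_zero hB (by linarith)) hab C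
    _ = 5 := by norm_num

theorem eigenvalue_multiplicity_le_five_general
    (α β μ m r : ℝ) (hβ : 0 < β) (hr : 0 < r) (hrm : r < m)
    (lam : ℤ → ℝ)
    (hlam : ∀ k : ℤ, lam k =
      -β * (k : ℝ) * |(k : ℝ)| ^ (2 * m) + α * (k : ℝ) * |(k : ℝ)| ^ (2 * r) - 2 * μ * (k : ℝ)) :
    ∀ c : ℝ, {k : ℤ | lam k = c}.Finite ∧ {k : ℤ | lam k = c}.ncard ≤ 5 := by
  intro c
  have hcast : ((↑) : ℤ → ℝ) '' {k | lam k = c} ⊆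
      {x : ℝ | -β * x * |x| ^ (2 * m) + α * x * |x| ^ (2 * r) - 2 * μ * x = c} := by
    rintro _ ⟨k, hk, rfl⟩
    exact (hlam k).symm.trans hk
  refine encard_le_coe_iff_finite_ncard_le.1 ?_
  calc {k | lam k = c}.encard = (((↑) : ℤ → ℝ) '' {k | lam k = c}).encard :=
        (Int.cast_injective.encard_image _).symm
    _ ≤ 5 := (encard_le_encard hcast).trans
        (encard_fiber_mul_abs_rpow_sub_le_five (by linarith) (by linarith) hβ.ne' (by linarith) c)

/-- For every real number `c`, the set `{k : ℤ | λ_k = c}` contains at most 5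
elements, where `λ_k = -β k |k|^{2m} + α k |k|^{2r} - 2μ k`. -/
theorem eigenvalue_multiplicity_le_five
    (α β μ m r : ℝ) (hα : 0 < α) (hβ : 0 < β) (hr : 0 < r) (hrm : r < m)
    (lam : ℤ → ℝ)
    (hlam : ∀ k : ℤ, lam k =
      -β * (k : ℝ) * |(k : ℝ)| ^ (2 * m) + α * (k : ℝ) * |(k : ℝ)| ^ (2 * r) - 2 * μ * (k : ℝ)) :
    ∀ c : ℝ, {k : ℤ | lam k = c}.Finite ∧ {k : ℤ | lam k = c}.ncard ≤ 5 :=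
  eigenvalue_multiplicity_le_five_general α β μ m r hβ hr hrm lam hlam
end

section
/- There exists K ∈ ℕ such that for all k₁, k ∈ ℤ with |k₁| ≥ K, the equality λ_k = λ_{k₁} implies k = k₁ (all eigenvalues iλ_{k₁} with |k₁| large are simple). -/
open Filter


/-- There exists `K ∈ ℕ` such that for all `k₁, k ∈ ℤ` with `|k₁| ≥ K`,
`λ_k = λ_{k₁}` implies `k = k₁` (eigenvalues with large index are simple), where
`λ_k = -β k |k|^{2m} + α k |k|^{2r} - 2μ k`. -/
theorem eigenvalues_simple_for_large_index
    (α β μ m r : ℝ) (hα : 0 < α) (hβ : 0 < β) (hr : 0 < r) (hrm : r < m)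
    (lam : ℤ → ℝ)
    (hlam : ∀ k : ℤ, lam k =
      -β * (k : ℝ) * |(k : ℝ)| ^ (2 * m) + α * (k : ℝ) * |(k : ℝ)| ^ (2 * r) - 2 * μ * (k : ℝ)) :
    ∃ K : ℕ, ∀ k₁ k : ℤ, (K : ℤ) ≤ |k₁| → lam k = lam k₁ → k = k₁ := by
  set χ : ℝ → ℝ := fun t => β * t ^ (2*m) - α * t ^ (2*r) + 2*μ with hχ
  have hlam' : ∀ k : ℤ, lam k = -(k:ℝ) * χ |(k:ℝ)| := by
    intro k; rw [hlam]; simp only [hχ]; ring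
  -- choose a threshold T
  have he1 : ∀ᶠ t : ℝ in atTop, α + 1 ≤ β * t ^ (2*(m-r)) :=
    ((tendsto_rpow_atTop (by linarith : (0:ℝ) < 2*(m-r))).const_mul_atTop hβ).eventually_ge_atTop (α+1)
  have he2 : ∀ᶠ t : ℝ in atTop, -(2*μ) + 1 ≤ t ^ (2*r) :=
    (tendsto_rpow_atTop (by linarith : (0:ℝ) < 2*r)).eventually_ge_atTop _
  have he3 : ∀ᶠ t : ℝ in atTop, (1:ℝ) ≤ t := eventually_ge_atTop 1
  obtain ⟨T, hT⟩ := eventually_atTop.mp ((he1.and he2).and he3)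
  set T' : ℝ := max T 1 with hT'def
  have hT'1 : (1:ℝ) ≤ T' := le_max_right _ _
  have hTprop : ∀ t, T' ≤ t → (α + 1 ≤ β * t ^ (2*(m-r)) ∧ -(2*μ) + 1 ≤ t ^ (2*r)) ∧ (1:ℝ) ≤ t :=
    fun t ht => hT t (le_trans (le_max_left _ _) ht)
  -- rewrite χ
  have hkey : ∀ t, T' ≤ t → χ t = t^(2*r) * (β * t^(2*(m-r)) - α) + 2*μ := by
    intro t ht
    have ht0 : (0:ℝ) < t := lt_of_lt_of_le zero_lt_one (hTprop t ht).2
    simp only [hχ]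
    rw [show 2*m = 2*r + 2*(m-r) by ring, Real.rpow_add ht0]
    ring
  have hχpos : ∀ t, T' ≤ t → 1 ≤ χ t := by
    intro t ht
    obtain ⟨⟨h1, h2⟩, h3⟩ := hTprop t ht
    rw [hkey t ht]
    have hp : (0:ℝ) < t ^ (2*r) := Real.rpow_pos_of_pos (by linarith) _
    nlinarith
  have hχmono : ∀ s t, T' ≤ s → s < t → χ s < χ t := by
    intro s t hs hst
    have hs0 : (0:ℝ) < s := lt_of_lt_of_le zero_lt_one (hTprop s hs).2
    obtain ⟨⟨h1, h2⟩, h3⟩ := hTprop s hs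
    rw [hkey s hs, hkey t (le_of_lt (lt_of_le_of_lt hs hst))]
    have e1 : s ^ (2*r) < t ^ (2*r) := Real.rpow_lt_rpow hs0.le hst (by linarith)
    have e2 : s ^ (2*(m-r)) < t ^ (2*(m-r)) := Real.rpow_lt_rpow hs0.le hst (by linarith)
    have hp : (0:ℝ) < s ^ (2*r) := Real.rpow_pos_of_pos hs0 _
    have hb1 : (1:ℝ) ≤ β * s ^ (2*(m-r)) - α := by linarith
    have h4 : s^(2*r) * (β*s^(2*(m-r)) - α) < t^(2*r) * (β*s^(2*(m-r)) - α) := by nlinarith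
    have h5 : t^(2*r) * (β*s^(2*(m-r)) - α) ≤ t^(2*r) * (β*t^(2*(m-r)) - α) :=
      mul_le_mul_of_nonneg_left (by nlinarith) (by linarith)
    linarith
  -- φ t = t * χ t strict mono and lower bound
  have hφmono : ∀ s t, T' ≤ s → s < t → s * χ s < t * χ t := by
    intro s t hs hst
    have h1 := hχpos s hs
    have h2 := hχmono s t hs hst
    have hs0 : (0:ℝ) < s := lt_of_lt_of_le zero_lt_one (hTprop s hs).2
    nlinarith
  have hφinj : ∀ s t, T' ≤ s → T' ≤ t → s * χ s = t * χ t → s = t := by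
    intro s t hs ht heq
    rcases lt_trichotomy s t with h | h | h
    · exact absurd heq (ne_of_lt (hφmono s t hs h))
    · exact h
    · exact absurd heq.symm (ne_of_lt (hφmono t s ht h))
  have hφlb : ∀ t, T' ≤ t → t ≤ t * χ t := by
    intro t ht
    have h1 := hχpos t ht
    have ht0 : (0:ℝ) < t := lt_of_lt_of_le zero_lt_one (hTprop t ht).2
    nlinarith
  -- bound on small indices
  set N : ℕ := ⌈T'⌉₊ with hN
  have hTN : T' ≤ (N:ℝ) := Nat.le_ceil T'
  set B : ℝ := ∑ j ∈ Finset.Icc (-(N:ℤ)) (N:ℤ), |lam j| with hB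
  have hBle : ∀ j : ℤ, |j| ≤ (N:ℤ) → |lam j| ≤ B := by
    intro j hj
    have hmem : j ∈ Finset.Icc (-(N:ℤ)) (N:ℤ) := by
      rw [Finset.mem_Icc]; constructor <;> [linarith [neg_abs_le j]; linarith [le_abs_self j]]
    exact Finset.single_le_sum (fun i _ => abs_nonneg (lam i)) hmem
  -- choose K
  set K : ℕ := ⌈max T' B⌉₊ + N + 1 with hK
  refine ⟨K, ?_⟩
  intro k₁ k hk₁ heq
  have hKT : T' ≤ (K:ℝ) := by
    calc T' ≤ max T' B := le_max_left _ _
    _ ≤ (⌈max T' B⌉₊ : ℝ) := Nat.le_ceil _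
    _ ≤ (K:ℝ) := by push_cast [hK]; linarith
  have hKB : B < (K:ℝ) := by
    calc B ≤ max T' B := le_max_right _ _
    _ ≤ (⌈max T' B⌉₊ : ℝ) := Nat.le_ceil _
    _ < (K:ℝ) := by push_cast [hK]; linarith
  -- facts about k₁
  have hk₁R : (K:ℝ) ≤ |(k₁:ℝ)| := by
    rw [← Int.cast_abs]; exact_mod_cast hk₁
  have ha : T' ≤ |(k₁:ℝ)| := le_trans hKT hk₁R
  have hφa : B < |(k₁:ℝ)| * χ |(k₁:ℝ)| :=
    lt_of_lt_of_le (lt_of_lt_of_le hKB hk₁R) (hφlb _ ha)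
  have habs : |lam k₁| = |(k₁:ℝ)| * χ |(k₁:ℝ)| := by
    rw [hlam' k₁, abs_mul, abs_neg,
      abs_of_pos (show (0:ℝ) < χ |(k₁:ℝ)| from lt_of_lt_of_le zero_lt_one (hχpos _ ha))]
  -- k can't be a small index
  have hkbig : (N:ℤ) < |k| := by
    by_contra h
    push_neg at h
    have h1 : |lam k| ≤ B := hBle k h
    rw [heq, habs] at h1
    linarith
  have hb : T' ≤ |(k:ℝ)| := by
    rw [← Int.cast_abs]
    have : ((N:ℤ):ℝ) + 1 ≤ ((|k|:ℤ):ℝ) := by exact_mod_cast hkbig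
    push_cast at this ⊢
    linarith
  -- main equation
  have heqn : (k:ℝ) * χ |(k:ℝ)| = (k₁:ℝ) * χ |(k₁:ℝ)| := by
    have := heq
    rw [hlam' k, hlam' k₁] at this
    linarith
  have hχb : 0 < χ |(k:ℝ)| := lt_of_lt_of_le zero_lt_one (hχpos _ hb)
  have hχa : 0 < χ |(k₁:ℝ)| := lt_of_lt_of_le zero_lt_one (hχpos _ ha)
  have hk0 : (0:ℝ) < |(k:ℝ)| := lt_of_lt_of_le zero_lt_one (le_trans hT'1 hb)
  have hk₁0 : (0:ℝ) < |(k₁:ℝ)| := lt_of_lt_of_le zero_lt_one (le_trans hT'1 ha)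
  -- signs must agree
  have habseq : |(k:ℝ)| = |(k₁:ℝ)| := by
    apply hφinj _ _ hb ha
    have habs2 : abs ((k:ℝ) * χ |(k:ℝ)|) = abs ((k₁:ℝ) * χ |(k₁:ℝ)|) := by rw [heqn]
    rwa [abs_mul, abs_mul, abs_of_pos hχb, abs_of_pos hχa] at habs2
  have hsame : (k:ℝ) = (k₁:ℝ) := by
    rw [habseq] at heqn
    exact mul_right_cancel₀ (ne_of_gt hχa) heqn
  exact_mod_cast hsame
end

section
/- For every constant C₀ > 1 there exist c > 0 and K ∈ ℕ (depending on β, δ, m, C₀) such that for all k, n ∈ ℤ with k ≠ n, C₀⁻¹|n| ≤ |k| ≤ C₀|n| and |k| ≥ K, and all τ ∈ ℝ, one has max{ ⟨(τ - λ_k)/⟨k⟩^δ⟩ , ⟨(τ - λ_n)/⟨n⟩^δ⟩ } ≥ c · (max{⟨k⟩, ⟨n⟩})^{2m - δ}. -/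
/-! The leading term of `λ(x) = -β x|x|^{2m} + α x|x|^{2r} - 2μx` dominates the rest. With
`φ_p(x) = x|x|^p`, on `|x|, |y| ≥ K` one has `|φ_s(x) - φ_s(y)| ≤ K^{s-p} |φ_p(x) - φ_p(y)|` for
`0 ≤ s ≤ p`, because `K^{s-p} φ_p - φ_s` is odd, vanishes at `K` and increases on `[K, ∞)`; and
`|φ_p(x) - φ_p(y)| ≥ max(|x|, |y|)^p` as soon as `|x - y| ≥ 1`. For `K` large this gives
`|λ_k - λ_n| ≥ (β/2) max(|k|, |n|)^{2m}` for distinct large `k, n`. Since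
`|λ_k - λ_n| ≤ |τ - λ_k| + |τ - λ_n|` and both weights `⟨k⟩^δ, ⟨n⟩^δ` are at most
`max(⟨k⟩, ⟨n⟩)^δ`, one of the two modulations is at least `|λ_k - λ_n| / (2 max(⟨k⟩, ⟨n⟩)^δ)`;
finally `max(⟨k⟩, ⟨n⟩) ≤ √2 max(|k|, |n|)`. -/

open Real Set Filter Topology

/-- The Japanese bracket `⟨x⟩ = (1 + |x|²)^{1/2}`. -/
noncomputable def jbr (x : ℝ) : ℝ := Real.sqrt (1 + x ^ 2)

lemma one_le_jbr (x : ℝ) : 1 ≤ jbr x :=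
  Real.one_le_sqrt.mpr (by nlinarith [sq_nonneg x])

lemma jbr_pos (x : ℝ) : 0 < jbr x := zero_lt_one.trans_le (one_le_jbr x)

lemma abs_le_jbr (x : ℝ) : |x| ≤ jbr x := by
  rw [← Real.sqrt_sq_eq_abs]
  exact Real.sqrt_le_sqrt (by linarith)

lemma jbr_le_sqrt_two_mul_abs {x : ℝ} (hx : 1 ≤ |x|) : jbr x ≤ √2 * |x| := by
  rw [← Real.sqrt_sq_eq_abs, ← Real.sqrt_mul zero_le_two]
  exact Real.sqrt_le_sqrt (by nlinarith [sq_abs x])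

lemma max_jbr_rpow_two_mul_le {m x y : ℝ} (hm : 0 ≤ m) (hx : 1 ≤ |x|) (hy : 1 ≤ |y|) :
    max (jbr x) (jbr y) ^ (2 * m) ≤ 2 ^ m * max |x| |y| ^ (2 * m) := by
  have hle : max (jbr x) (jbr y) ≤ √2 * max |x| |y| := by
    rw [mul_max_of_nonneg _ _ (Real.sqrt_nonneg 2)]
    exact max_le_max (jbr_le_sqrt_two_mul_abs hx) (jbr_le_sqrt_two_mul_abs hy)
  calc max (jbr x) (jbr y) ^ (2 * m) ≤ (√2 * max |x| |y|) ^ (2 * m) :=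
        rpow_le_rpow (by linarith [one_le_jbr x, le_max_left (jbr x) (jbr y)]) hle (by linarith)
    _ = 2 ^ m * max |x| |y| ^ (2 * m) := by
        rw [mul_rpow (Real.sqrt_nonneg 2) (by positivity), rpow_mul (Real.sqrt_nonneg 2),
          rpow_two, Real.sq_sqrt zero_le_two]

lemma abs_sub_div_le_max_jbr {u v τ a b W : ℝ} (ha : 0 < a) (hb : 0 < b) (haW : a ≤ W)
    (hbW : b ≤ W) : |u - v| / (2 * W) ≤ max (jbr ((τ - u) / a)) (jbr ((τ - v) / b)) := by
  have hu : |τ - u| / W ≤ |(τ - u) / a| := by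
    rw [abs_div, abs_of_pos ha]
    exact div_le_div_of_nonneg_left (abs_nonneg _) ha haW
  have hv : |τ - v| / W ≤ |(τ - v) / b| := by
    rw [abs_div, abs_of_pos hb]
    exact div_le_div_of_nonneg_left (abs_nonneg _) hb hbW
  have htri : |u - v| ≤ |τ - u| + |τ - v| := by
    rw [abs_sub_comm τ u]; exact abs_sub_le u τ v
  calc |u - v| / (2 * W) ≤ (|τ - u| / W + |τ - v| / W) / 2 := by
        rw [← add_div, div_div, mul_comm]; gcongr; linarith
    _ ≤ max |(τ - u) / a| |(τ - v) / b| := by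
        linarith [le_max_left |(τ - u) / a| |(τ - v) / b|, le_max_right |(τ - u) / a| |(τ - v) / b|]
    _ ≤ _ := max_le_max (abs_le_jbr _) (abs_le_jbr _)

lemma Function.Odd.le_of_monotoneOn_Ici {f : ℝ → ℝ} {K x y : ℝ} (hodd : Function.Odd f)
    (hmono : MonotoneOn f (Ici K)) (hK : 0 ≤ f K) (hx : K ≤ |x|) (hy : K ≤ |y|) (hyx : y ≤ x) :
    f y ≤ f x := by
  rcases le_or_gt 0 y with hy0 | hy0
  · rw [abs_of_nonneg hy0] at hy
    exact hmono hy (hy.trans hyx) hyx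
  rcases le_or_gt 0 x with hx0 | hx0
  · rw [abs_of_nonneg hx0] at hx
    rw [abs_of_neg hy0] at hy
    have h1 := hmono (mem_Ici.mpr le_rfl) hy hy
    have h2 := hmono (mem_Ici.mpr le_rfl) hx hx
    linarith [hodd y]
  · rw [abs_of_neg hx0] at hx
    rw [abs_of_neg hy0] at hy
    have := hmono hx hy (neg_le_neg hyx)
    rw [hodd, hodd] at this
    linarith

noncomputable def oddPow (p x : ℝ) : ℝ := x * |x| ^ p

lemma oddPow_odd (p : ℝ) : Function.Odd (oddPow p) := fun x => by
  simp only [oddPow, abs_neg, neg_mul]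

@[simp] lemma oddPow_zero (x : ℝ) : oddPow 0 x = x := by simp [oddPow]

lemma oddPow_of_pos {p x : ℝ} (hx : 0 < x) : oddPow p x = x ^ (p + 1) := by
  rw [oddPow, abs_of_pos hx, rpow_add_one hx.ne', mul_comm]

lemma oddPow_monotone {p : ℝ} (hp : 0 ≤ p) : Monotone (oddPow p) := by
  have hmono : MonotoneOn (oddPow p) (Ici 0) := fun a ha b hb hab => by
    simp only [mem_Ici] at ha hb
    simp only [oddPow, abs_of_nonneg ha, abs_of_nonneg hb]
    exact mul_le_mul hab (rpow_le_rpow ha hab hp) (by positivity) hb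
  exact fun y x hyx => (oddPow_odd p).le_of_monotoneOn_Ici hmono (by simp [oddPow])
    (abs_nonneg x) (abs_nonneg y) hyx

lemma rpow_sub_rpow_le {K x y a b : ℝ} (hK : 0 < K) (hKy : K ≤ y) (hyx : y ≤ x) (hab : a ≤ b)
    (hb : 0 ≤ b) : x ^ a - y ^ a ≤ K ^ (a - b) * (x ^ b - y ^ b) := by
  have hy : 0 < y := hK.trans_le hKy
  have hx : 0 < x := hy.trans_le hyx
  have hscaled : y ^ (b - a) * (x ^ a - y ^ a) ≤ x ^ b - y ^ b := by
    have : y ^ (b - a) * x ^ a ≤ x ^ (b - a) * x ^ a :=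
      mul_le_mul_of_nonneg_right (rpow_le_rpow hy.le hyx (by linarith)) (by positivity)
    rw [← rpow_add hx, sub_add_cancel] at this
    rw [mul_sub, ← rpow_add hy, sub_add_cancel]
    linarith
  calc x ^ a - y ^ a = y ^ (a - b) * (y ^ (b - a) * (x ^ a - y ^ a)) := by
        rw [← mul_assoc, ← rpow_add hy, show a - b + (b - a) = 0 by ring, rpow_zero, one_mul]
    _ ≤ y ^ (a - b) * (x ^ b - y ^ b) := by gcongr
    _ ≤ K ^ (a - b) * (x ^ b - y ^ b) :=
        mul_le_mul_of_nonneg_right (rpow_le_rpow_of_nonpos hK hKy (by linarith))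
          (by linarith [rpow_le_rpow hy.le hyx hb])

lemma abs_oddPow_sub_le {K s p x y : ℝ} (hs : 0 ≤ s) (hsp : s ≤ p) (hK : 0 < K) (hx : K ≤ |x|)
    (hy : K ≤ |y|) :
    |oddPow s x - oddPow s y| ≤ K ^ (s - p) * |oddPow p x - oddPow p y| := by
  wlog hyx : y ≤ x generalizing x y
  · rw [abs_sub_comm, abs_sub_comm (oddPow p x)]
    exact this hy hx (le_of_not_ge hyx)
  set g : ℝ → ℝ := fun t => K ^ (s - p) * oddPow p t - oddPow s t
  have hodd : Function.Odd g := fun t => by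
    simp only [g, oddPow_odd p t, oddPow_odd s t]; ring
  have hmono : MonotoneOn g (Ici K) := fun a ha b hb hab => by
    simp only [mem_Ici] at ha hb
    have := rpow_sub_rpow_le hK ha hab (by linarith : s + 1 ≤ p + 1) (by linarith)
    simp only [g, oddPow_of_pos (hK.trans_le ha), oddPow_of_pos (hK.trans_le hb)]
    rw [show s + 1 - (p + 1) = s - p by ring] at this
    linarith
  have hgK : g K = 0 := by
    simp only [g, oddPow_of_pos hK]
    rw [← rpow_add hK, show s - p + (p + 1) = s + 1 by ring, sub_self]
  have := hodd.le_of_monotoneOn_Ici hmono hgK.ge hx hy hyx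
  rw [abs_of_nonneg (sub_nonneg.mpr (oddPow_monotone hs hyx)),
    abs_of_nonneg (sub_nonneg.mpr (oddPow_monotone (hs.trans hsp) hyx))]
  simp only [g] at this
  linarith

lemma rpow_le_oddPow_sub {p x y : ℝ} (hp : 0 ≤ p) (hx : 1 ≤ x) (hxy : y + 1 ≤ x) :
    x ^ p ≤ oddPow p x - oddPow p y := by
  have hy : oddPow p y ≤ x ^ p * (x - 1) := by
    rcases le_or_gt 0 y with hy0 | hy0
    · rw [oddPow, abs_of_nonneg hy0, mul_comm]
      exact mul_le_mul (rpow_le_rpow hy0 (by linarith) hp) (by linarith) hy0 (by positivity)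
    · have : oddPow p y ≤ 0 := mul_nonpos_of_nonpos_of_nonneg hy0.le (by positivity)
      nlinarith [rpow_nonneg (zero_le_one.trans hx) p]
  rw [oddPow_of_pos (by linarith), rpow_add_one (by linarith)]
  linarith

lemma max_rpow_le_abs_oddPow_sub {p x y : ℝ} (hp : 0 ≤ p) (h1 : 1 ≤ max |x| |y|)
    (hxy : 1 ≤ |x - y|) : max |x| |y| ^ p ≤ |oddPow p x - oddPow p y| := by
  wlog hyx : |y| ≤ |x| generalizing x y
  · rw [max_comm, abs_sub_comm] at *
    exact this h1 hxy (le_of_not_ge hyx)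
  rw [max_eq_left hyx] at h1 ⊢
  wlog hx0 : 0 < x generalizing x y
  · have hx0' : 0 < -x :=
      neg_pos.mpr ((not_lt.mp hx0).lt_of_ne (by rintro rfl; simp at h1; linarith))
    have := this (x := -x) (y := -y) (by rwa [abs_neg]) (by rwa [neg_sub_neg, abs_sub_comm])
      (by rwa [abs_neg, abs_neg]) hx0'
    rwa [abs_neg, oddPow_odd, oddPow_odd, neg_sub_neg, abs_sub_comm] at this
  rw [abs_of_pos hx0] at h1 hyx ⊢
  rw [abs_of_nonneg (by linarith [le_abs_self y])] at hxy
  exact (rpow_le_oddPow_sub hp h1 (by linarith)).trans (le_abs_self _)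

noncomputable def dispersion (α β μ m r x : ℝ) : ℝ :=
  -β * oddPow (2 * m) x + α * oddPow (2 * r) x - 2 * μ * x

lemma exists_lower_order_le_half {α β μ m r : ℝ} (hβ : 0 < β) (hr : 0 ≤ r) (hrm : r < m) :
    ∃ K, 1 ≤ K ∧ |α| * K ^ (2 * r - 2 * m) + 2 * |μ| * K ^ (-(2 * m)) ≤ β / 2 := by
  have hlim : Tendsto (fun K : ℝ => |α| * K ^ (2 * r - 2 * m) + 2 * |μ| * K ^ (-(2 * m)))
      atTop (𝓝 (|α| * 0 + 2 * |μ| * 0)) := by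
    refine (Tendsto.const_mul _ ?_).add (Tendsto.const_mul _ ?_)
    · simpa using tendsto_rpow_neg_atTop (y := 2 * m - 2 * r) (by linarith)
    · simpa using tendsto_rpow_neg_atTop (y := 2 * m) (by linarith)
  rw [mul_zero, mul_zero, add_zero] at hlim
  obtain ⟨K, hK1, hK⟩ := ((eventually_ge_atTop 1).and
    (hlim.eventually (ge_mem_nhds (half_pos hβ)))).exists
  exact ⟨K, hK1, hK⟩

lemma abs_dispersion_sub_ge {α β μ m r K x y : ℝ} (hβ : 0 < β) (hr : 0 ≤ r) (hrm : r < m)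
    (hK1 : 1 ≤ K) (hK : |α| * K ^ (2 * r - 2 * m) + 2 * |μ| * K ^ (-(2 * m)) ≤ β / 2)
    (hx : K ≤ |x|) (hy : K ≤ |y|) (hxy : 1 ≤ |x - y|) :
    β / 2 * max |x| |y| ^ (2 * m) ≤ |dispersion α β μ m r x - dispersion α β μ m r y| := by
  have hK0 : 0 < K := by linarith
  set D := |oddPow (2 * m) x - oddPow (2 * m) y|
  have hmain : max |x| |y| ^ (2 * m) ≤ D :=
    max_rpow_le_abs_oddPow_sub (by linarith) (hK1.trans (hx.trans (le_max_left _ _))) hxy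
  have hpert : |oddPow (2 * r) x - oddPow (2 * r) y| ≤ K ^ (2 * r - 2 * m) * D :=
    abs_oddPow_sub_le (by linarith) (by linarith) hK0 hx hy
  have hlin : |x - y| ≤ K ^ (-(2 * m)) * D := by
    have := abs_oddPow_sub_le (s := 0) le_rfl (by linarith : (0 : ℝ) ≤ 2 * m) hK0 hx hy
    rwa [oddPow_zero, oddPow_zero, zero_sub] at this
  have htri : β * D ≤ |dispersion α β μ m r x - dispersion α β μ m r y| +
      |α| * |oddPow (2 * r) x - oddPow (2 * r) y| + 2 * |μ| * |x - y| := by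
    have hsplit : -β * (oddPow (2 * m) x - oddPow (2 * m) y) =
        (dispersion α β μ m r x - dispersion α β μ m r y) +
          -(α * (oddPow (2 * r) x - oddPow (2 * r) y)) + 2 * μ * (x - y) := by
      simp only [dispersion]; ring
    calc β * D = |-β * (oddPow (2 * m) x - oddPow (2 * m) y)| := by
          rw [abs_mul, abs_neg, abs_of_pos hβ]
      _ ≤ _ := by
          rw [hsplit]
          refine (abs_add_three _ _ _).trans_eq ?_
          rw [abs_neg, abs_mul, abs_mul, abs_mul, abs_two]
  have hD : 0 ≤ D := abs_nonneg _
  nlinarith [mul_le_mul_of_nonneg_left hpert (abs_nonneg α),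
    mul_le_mul_of_nonneg_left hlin (by positivity : (0 : ℝ) ≤ 2 * |μ|)]

theorem modulation_max_lower_bound_general
    (α β μ m r δ : ℝ) (hβ : 0 < β) (hr : 0 < r) (hrm : r < m) (hδ : 0 < δ)
    (lam : ℤ → ℝ)
    (hlam : ∀ k : ℤ, lam k =
      -β * (k : ℝ) * |(k : ℝ)| ^ (2 * m) + α * (k : ℝ) * |(k : ℝ)| ^ (2 * r) - 2 * μ * (k : ℝ)) :
    ∀ C₀ : ℝ, 1 < C₀ → ∃ c > 0, ∃ K : ℕ, ∀ k n : ℤ, k ≠ n →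
      C₀⁻¹ * |(n : ℝ)| ≤ |(k : ℝ)| → |(k : ℝ)| ≤ C₀ * |(n : ℝ)| → (K : ℤ) ≤ |k| →
      ∀ τ : ℝ,
        c * max (jbr (k : ℝ)) (jbr (n : ℝ)) ^ (2 * m - δ) ≤
          max (jbr ((τ - lam k) / jbr (k : ℝ) ^ δ)) (jbr ((τ - lam n) / jbr (n : ℝ) ^ δ)) := by
  intro C₀ hC₀
  obtain ⟨K, hK1, hK⟩ := exists_lower_order_le_half (α := α) (μ := μ) hβ hr.le hrm
  refine ⟨β / (4 * 2 ^ m), by positivity, ⌈C₀ * K⌉₊, fun k n hkn _ hkn' hkK τ => ?_⟩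
  have hCk : C₀ * K ≤ |(k : ℝ)| :=
    (Nat.le_ceil _).trans (by exact_mod_cast hkK)
  have hk : K ≤ |(k : ℝ)| := by nlinarith
  have hn : K ≤ |(n : ℝ)| := by nlinarith
  have hsep : (1 : ℝ) ≤ |(k : ℝ) - n| := by exact_mod_cast Int.one_le_abs (sub_ne_zero.mpr hkn)
  have hlam' : lam k - lam n = dispersion α β μ m r k - dispersion α β μ m r n := by
    simp only [hlam, dispersion, oddPow]; ring
  have hgap := abs_dispersion_sub_ge hβ hr.le hrm hK1 hK hk hn hsep
  rw [← hlam'] at hgap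
  set M := max (jbr k) (jbr n)
  have hM : 0 < M := (jbr_pos _).trans_le (le_max_left _ _)
  have hMN := max_jbr_rpow_two_mul_le (m := m) (by linarith) (hK1.trans hk) (hK1.trans hn)
  calc β / (4 * 2 ^ m) * M ^ (2 * m - δ) = β / 2 * (M ^ (2 * m) / 2 ^ m) / (2 * M ^ δ) := by
        rw [rpow_sub hM]; field_simp; ring
    _ ≤ |lam k - lam n| / (2 * M ^ δ) := by
        gcongr
        refine le_trans ?_ hgap
        gcongr
        rwa [div_le_iff₀' (by positivity)]
    _ ≤ _ := abs_sub_div_le_max_jbr (rpow_pos_of_pos (jbr_pos _) δ) (rpow_pos_of_pos (jbr_pos _) δ)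
        (rpow_le_rpow (jbr_pos _).le (le_max_left _ _) hδ.le)
        (rpow_le_rpow (jbr_pos _).le (le_max_right _ _) hδ.le)

/-- for every `C₀ > 1` there are `c > 0` and `K ∈ ℕ` such that for all
`k ≠ n` with `C₀⁻¹|n| ≤ |k| ≤ C₀|n|` (i.e. `k ∼ n`) and `|k| ≥ K`, and all `τ ∈ ℝ`,
`max{⟨(τ-λ_k)/⟨k⟩^δ⟩, ⟨(τ-λ_n)/⟨n⟩^δ⟩} ≥ c (max{⟨k⟩,⟨n⟩})^{2m-δ}`. -/
theorem modulation_max_lower_bound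
    (α β μ m r δ : ℝ) (hα : 0 < α) (hβ : 0 < β) (hr : 0 < r) (hrm : r < m) (hδ : 0 < δ)
    (lam : ℤ → ℝ)
    (hlam : ∀ k : ℤ, lam k =
      -β * (k : ℝ) * |(k : ℝ)| ^ (2 * m) + α * (k : ℝ) * |(k : ℝ)| ^ (2 * r) - 2 * μ * (k : ℝ)) :
    ∀ C₀ : ℝ, 1 < C₀ → ∃ c > 0, ∃ K : ℕ, ∀ k n : ℤ, k ≠ n →
      C₀⁻¹ * |(n : ℝ)| ≤ |(k : ℝ)| → |(k : ℝ)| ≤ C₀ * |(n : ℝ)| → (K : ℤ) ≤ |k| →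
      ∀ τ : ℝ,
        c * max (jbr (k : ℝ)) (jbr (n : ℝ)) ^ (2 * m - δ) ≤
          max (jbr ((τ - lam k) / jbr (k : ℝ) ^ δ)) (jbr ((τ - lam n) / jbr (n : ℝ) ^ δ)) :=
  modulation_max_lower_bound_general α β μ m r δ hβ hr hrm hδ lam hlam
end
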